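/- arXiv:2510.27557 — 5 statements merged into one kernel-verified Lean document; each statement's English description precedes it below -/
import Mathlib

section
/- Let F : A ⥤ B be a functor admitting a right adjoint U, and let p : X ⥤ Y be a cocartesian fibration. Consider the functor Φ from the comma category Comma (𝟭 Fun(A,X)) ((− ∘ F) : Fun(B,X) ⥤ Fun(A,X)) — whose objects are triples (S : A ⥤ X, L : B ⥤ X, α : S ⟶ L ∘ F) — to the comma category Comma ((p ∘ −) : Fun(A,X) ⥤ Fun(A,Y)) ((− ∘ F) : Fun(B,Y) ⥤ Fun(A,Y)) — whose objects are triples (S : A ⥤ X, M : B ⥤ Y, β : p ∘ S ⟶ M ∘ F) — sending (S, L, α) to (S, p ∘ L, p·α), where p·α denotes the whiskering of α with p. Then Φ admits a fully faithful left adjoint (a left adjoint whose unit is a natural isomorphism). -/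
open CategoryTheory

universe v u

namespace Paper

/-- The canonical comparison functor `Arrow X ⥤ Comma p (𝟭 B)`. -/
def toCocartComma {X B : Type*} [Category X] [Category B] (p : X ⥤ B) :
    Arrow X ⥤ Comma p (𝟭 B) where
  obj f := { left := f.left, right := p.obj f.right, hom := p.map f.hom }
  map {f g} φ :=
    { left := φ.left
      right := p.map φ.right
      w := by
        dsimp
        rw [← p.map_comp, ← p.map_comp, Arrow.w] }

/-- A functor `p : X ⥤ B` is a cocartesian fibration if the canonical comparison functor
`Arrow X ⥤ Comma p (𝟭 B)` admits a fully faithful left adjoint. -/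
def IsCocartesianFibration {X B : Type*} [Category X] [Category B] (p : X ⥤ B) : Prop :=
  ∃ (L : Comma p (𝟭 B) ⥤ Arrow X) (adj : L ⊣ toCocartComma p), IsIso adj.unit

variable {A B X Y : Type u} [Category.{v} A] [Category.{v} B] [Category.{v} X] [Category.{v} Y]

/-- The functor from the comma category of triples `(S : A ⥤ X, L : B ⥤ X, α : S ⟶ L ∘ F)`
to the comma category of triples `(S : A ⥤ X, M : B ⥤ Y, β : p ∘ S ⟶ M ∘ F)`, sending
`(S, L, α)` to `(S, p ∘ L, p·α)`. -/
def postcompWhisker (F : A ⥤ B) (p : X ⥤ Y) :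
    Comma (𝟭 (A ⥤ X)) ((Functor.whiskeringLeft A B X).obj F) ⥤
      Comma ((Functor.whiskeringRight A X Y).obj p) ((Functor.whiskeringLeft A B Y).obj F) where
  obj c :=
    { left := c.left
      right := c.right ⋙ p
      hom := Functor.whiskerRight c.hom p }
  map {c c'} φ :=
    { left := φ.left
      right := Functor.whiskerRight φ.right p
      w := by
        ext a
        have h := congr_app φ.w a
        dsimp at h ⊢
        rw [← p.map_comp, ← p.map_comp, h] }

/-!
Transposing along the adjunction `(− ∘ U) ⊣ (− ∘ F)` of functor categories turns the source of `Φ`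
into triples `(S, L, U ⋙ S ⟶ L)`, its target into triples `(S, M, U ⋙ S ⋙ p ⟶ M)`, and `Φ` into
postcomposition with `p`. In that form the left adjoint is computed pointwise in `b : B` by the
left adjoint `Λ` of `Arrow X ⥤ Comma p (𝟭 Y)`: the component `β_b` is sent to its cocartesian
lift `(U ⋙ S).obj b ≅ (Λ β_b).left ⟶ (Λ β_b).right`. The unit is then built from the unit of `Λ`,
so it is an isomorphism.
-/

open Functor

def HasFullyFaithfulLeftAdjoint {C D : Type*} [Category* C] [Category* D] (G : C ⥤ D) : Prop :=
  ∃ (F : D ⥤ C) (adj : F ⊣ G), IsIso adj.unit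

namespace HasFullyFaithfulLeftAdjoint

variable {C D E : Type*} [Category* C] [Category* D] [Category* E]

lemma of_iso {G G' : C ⥤ D} (h : HasFullyFaithfulLeftAdjoint G) (e : G ≅ G') :
    HasFullyFaithfulLeftAdjoint G' := by
  obtain ⟨F, adj, _⟩ := h
  refine ⟨F, adj.ofNatIsoRight e, ?_⟩
  have : (adj.ofNatIsoRight e).unit = adj.unit ≫ whiskerLeft F e.hom := by
    ext; simp [Adjunction.ofNatIsoRight]
  rw [this]
  infer_instance

lemma comp {G : C ⥤ D} {G' : D ⥤ E} (h : HasFullyFaithfulLeftAdjoint G)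
    (h' : HasFullyFaithfulLeftAdjoint G') : HasFullyFaithfulLeftAdjoint (G ⋙ G') := by
  obtain ⟨F, adj, _⟩ := h
  obtain ⟨F', adj', _⟩ := h'
  refine ⟨F' ⋙ F, adj'.comp adj, @NatIso.isIso_of_isIso_app _ _ _ _ _ _ _ fun X => ?_⟩
  rw [Adjunction.comp_unit_app]
  infer_instance

lemma equivalence_functor (e : C ≌ D) : HasFullyFaithfulLeftAdjoint e.functor :=
  ⟨e.inverse, e.symm.toAdjunction, inferInstanceAs (IsIso e.counitIso.inv)⟩

lemma of_equivalences {C' D' : Type*} [Category* C'] [Category* D'] {G : C ⥤ D} {G' : C' ⥤ D'}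
    (e : C ≌ C') (e' : D ≌ D') (sq : G ⋙ e'.functor ≅ e.functor ⋙ G')
    (h : HasFullyFaithfulLeftAdjoint G') : HasFullyFaithfulLeftAdjoint G :=
  ((equivalence_functor e).comp (h.comp (equivalence_functor e'.symm))).of_iso
    ((Functor.associator _ _ _).symm ≪≫ isoWhiskerRight sq.symm _ ≪≫ Functor.associator _ _ _ ≪≫
      isoWhiskerLeft G e'.unitIso.symm ≪≫ rightUnitor G)

end HasFullyFaithfulLeftAdjoint

lemma Comma.isIso_of_isIso_left_of_isIso_right {C D E : Type*} [Category* C] [Category* D]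
    [Category* E] {L : C ⥤ E} {R : D ⥤ E} {c c' : Comma L R} (f : c ⟶ c') [IsIso f.left]
    [IsIso f.right] : IsIso f :=
  (Comma.isoMk (asIso f.left) (asIso f.right) f.w).isIso_hom

section Transpose

variable {C D E : Type*} [Category* C] [Category* D] [Category* E]
  {G : E ⥤ D} {R : D ⥤ E} (adj : G ⊣ R) (L : C ⥤ E)

def Comma.transpose : Comma L R ⥤ Comma (L ⋙ G) (𝟭 D) where
  obj c := ⟨c.left, c.right, (adj.homEquiv _ _).symm c.hom⟩
  map φ := ⟨φ.left, φ.right, by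
    dsimp
    rw [← adj.homEquiv_naturality_left_symm, ← adj.homEquiv_naturality_right_symm, φ.w]⟩

def Comma.untranspose : Comma (L ⋙ G) (𝟭 D) ⥤ Comma L R where
  obj c := ⟨c.left, c.right, adj.homEquiv _ _ c.hom⟩
  map φ := ⟨φ.left, φ.right, by
    dsimp
    rw [← adj.homEquiv_naturality_left, ← adj.homEquiv_naturality_right]
    exact congrArg _ φ.w⟩

def Comma.transposeEquiv : Comma L R ≌ Comma (L ⋙ G) (𝟭 D) :=
  .mk (Comma.transpose adj L) (Comma.untranspose adj L)
    (NatIso.ofComponents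
      (fun c => Comma.isoMk (Iso.refl _) (Iso.refl _) (by
        change L.map (𝟙 _) ≫ adj.homEquiv _ _ ((adj.homEquiv _ _).symm c.hom) = c.hom ≫ R.map (𝟙 _)
        simp))
      (fun _ => by ext <;> exact (Category.comp_id _).trans (Category.id_comp _).symm))
    (NatIso.ofComponents
      (fun c => Comma.isoMk (Iso.refl _) (Iso.refl _) (by
        change G.map (L.map (𝟙 _)) ≫ c.hom = (adj.homEquiv _ _).symm (adj.homEquiv _ _ c.hom) ≫ 𝟙 _
        simp))
      (fun _ => by ext <;> exact (Category.comp_id _).trans (Category.id_comp _).symm))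

end Transpose

section Postcomp

variable {C J V W : Type*} [Category* C] [Category* J] [Category* V] [Category* W]
  (T : C ⥤ J ⥤ V) (p : V ⥤ W)

def postcompComma :
    Comma T (𝟭 (J ⥤ V)) ⥤ Comma (T ⋙ (whiskeringRight J V W).obj p) (𝟭 (J ⥤ W)) where
  obj c := ⟨c.left, c.right ⋙ p, whiskerRight c.hom p⟩
  map φ := ⟨φ.left, whiskerRight φ.right p, by
    ext j
    have := congr_app φ.w j
    dsimp at this ⊢
    rw [← p.map_comp, ← p.map_comp, this]⟩

def pointwiseComma :
    Comma (T ⋙ (whiskeringRight J V W).obj p) (𝟭 (J ⥤ W)) ⥤ J ⥤ Comma p (𝟭 W) where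
  obj d :=
    { obj j := ⟨(T.obj d.left).obj j, d.right.obj j, d.hom.app j⟩
      map f := ⟨(T.obj d.left).map f, d.right.map f, d.hom.naturality f⟩ }
  map φ := { app j := ⟨(T.map φ.left).app j, φ.right.app j, congr_app φ.w j⟩ }

def arrowsComma : Comma T (𝟭 (J ⥤ V)) ⥤ J ⥤ Arrow V where
  obj e :=
    { obj j := Arrow.mk (e.hom.app j)
      map f := Arrow.homMk ((T.obj e.left).map f) (e.right.map f) (e.hom.naturality f) }
  map φ :=
    { app j := Arrow.homMk ((T.map φ.left).app j) (φ.right.app j) (congr_app φ.w j)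
      naturality _ _ f := by
        ext
        exacts [(T.map φ.left).naturality f, φ.right.naturality f] }

variable {p} {Λ : Comma p (𝟭 W) ⥤ Arrow V} (adj : Λ ⊣ toCocartComma p)

/-- `κ.left ⟶ (Λ κ).left ⟶ (Λ κ).right`: the cocartesian lift of `κ.hom`. -/
def cocartesianLift : Comma.fst p (𝟭 W) ⟶ Λ ⋙ Arrow.rightFunc :=
  whiskerRight adj.unit (Comma.fst p (𝟭 W)) ≫ whiskerLeft Λ Arrow.leftToRight

def postcompCommaLeftAdjoint :
    Comma (T ⋙ (whiskeringRight J V W).obj p) (𝟭 (J ⥤ W)) ⥤ Comma T (𝟭 (J ⥤ V)) where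
  obj d := ⟨d.left, (pointwiseComma T p).obj d ⋙ Λ ⋙ Arrow.rightFunc,
    whiskerLeft ((pointwiseComma T p).obj d) (cocartesianLift adj)⟩
  map φ := ⟨φ.left, whiskerRight ((pointwiseComma T p).map φ) (Λ ⋙ Arrow.rightFunc), by
    ext j
    exact (cocartesianLift adj).naturality (((pointwiseComma T p).map φ).app j)⟩

def postcompCommaUnit : 𝟭 _ ⟶ postcompCommaLeftAdjoint T adj ⋙ postcompComma T p where
  app d := ⟨𝟙 d.left,
    whiskerLeft ((pointwiseComma T p).obj d) (whiskerRight adj.unit (Comma.snd p (𝟭 W))), by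
    ext j
    let κ := ((pointwiseComma T p).obj d).obj j
    change p.map ((T.map (𝟙 d.left)).app j) ≫ p.map ((adj.unit.app κ).left ≫ (Λ.obj κ).hom) =
      d.hom.app j ≫ (adj.unit.app κ).right
    rw [T.map_id, NatTrans.id_app, p.map_id, Category.id_comp]
    exact (p.map_comp _ _).trans (adj.unit.app κ).w⟩
  naturality d d' φ := by
    ext j
    · exact (Category.comp_id _).trans (Category.id_comp _).symm
    · exact congrArg CommaMorphism.right (adj.unit.naturality (((pointwiseComma T p).map φ).app j))

def postcompCommaCounit : postcompComma T p ⋙ postcompCommaLeftAdjoint T adj ⟶ 𝟭 _ where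
  app e := ⟨𝟙 e.left,
    whiskerLeft ((arrowsComma T).obj e) (whiskerRight adj.counit Arrow.rightFunc), by
    ext j
    let γ := Arrow.mk (e.hom.app j)
    change (T.map (𝟙 e.left)).app j ≫ γ.hom =
      ((adj.unit.app ((toCocartComma p).obj γ)).left ≫ (Λ.obj ((toCocartComma p).obj γ)).hom) ≫
        (adj.counit.app γ).right
    rw [T.map_id, NatTrans.id_app, Category.id_comp]
    erw [Category.assoc, ← Arrow.w (adj.counit.app γ)]
    have htriangle :=
      eq_whisker (congrArg CommaMorphism.left (adj.right_triangle_components γ)) γ.hom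
    exact ((Category.id_comp _).symm.trans htriangle.symm).trans (Category.assoc _ _ _)⟩
  naturality e e' φ := by
    ext j
    · exact (Category.comp_id _).trans (Category.id_comp _).symm
    · exact congrArg CommaMorphism.right (adj.counit.naturality (((arrowsComma T).map φ).app j))

variable [IsIso adj.unit]

noncomputable def arrowToCocartesianLift (κ : Comma p (𝟭 W)) :
    Λ.obj κ ⟶ Arrow.mk ((cocartesianLift adj).app κ) :=
  Arrow.homMk (CategoryTheory.inv (adj.unit.app κ)).left (𝟙 _) <|
    (Category.assoc _ _ _).symm.trans <|
      (eq_whisker (congrArg CommaMorphism.left (IsIso.inv_hom_id (adj.unit.app κ))) _).trans <|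
        (Category.id_comp _).trans (Category.comp_id _).symm

noncomputable def postcompCommaAdjunction :
    postcompCommaLeftAdjoint T adj ⊣ postcompComma T p where
  unit := postcompCommaUnit T adj
  counit := postcompCommaCounit T adj
  left_triangle_components d := by
    ext j
    · exact Category.id_comp _
    · let κ := ((pointwiseComma T p).obj d).obj j
      have hunit : ((pointwiseComma T p).map ((postcompCommaUnit T adj).app d)).app j =
          adj.homEquiv _ _ (arrowToCocartesianLift adj κ) := by
        rw [Adjunction.homEquiv_unit]
        ext
        · exact (congr_app (T.map_id d.left) j).trans
            (congrArg CommaMorphism.left (IsIso.hom_inv_id (adj.unit.app κ))).symm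
        · exact (Category.comp_id _).symm.trans (congrArg _ (p.map_id _).symm)
      have hcounit : Λ.map (((pointwiseComma T p).map ((postcompCommaUnit T adj).app d)).app j) ≫
          adj.counit.app (Arrow.mk ((cocartesianLift adj).app κ)) =
            arrowToCocartesianLift adj κ := by
        rw [hunit]
        exact (adj.homEquiv_counit _ _ _).symm.trans (Equiv.symm_apply_apply _ _)
      exact congrArg CommaMorphism.right hcounit
  right_triangle_components e := by
    ext j
    · exact Category.id_comp _
    · exact congrArg CommaMorphism.right
        (adj.right_triangle_components (((arrowsComma T).obj e).obj j))

lemma isIso_postcompCommaUnit : IsIso (postcompCommaUnit T adj) := by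
  have (d : Comma (T ⋙ (whiskeringRight J V W).obj p) (𝟭 (J ⥤ W))) :
      IsIso ((postcompCommaUnit T adj).app d) := by
    have : IsIso ((postcompCommaUnit T adj).app d).left := inferInstanceAs (IsIso (𝟙 d.left))
    have : IsIso ((postcompCommaUnit T adj).app d).right :=
      inferInstanceAs (IsIso (whiskerLeft _ (whiskerRight adj.unit (Comma.snd p (𝟭 W)))))
    exact Comma.isIso_of_isIso_left_of_isIso_right _
  exact NatIso.isIso_of_isIso_app _

end Postcomp

theorem hasFullyFaithfulLeftAdjoint_postcompComma {C J V W : Type*} [Category* C] [Category* J]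
    [Category* V] [Category* W] (T : C ⥤ J ⥤ V) {p : V ⥤ W} (hp : IsCocartesianFibration p) :
    HasFullyFaithfulLeftAdjoint (postcompComma T p) := by
  obtain ⟨Λ, adj, _⟩ := hp
  exact ⟨_, postcompCommaAdjunction T adj, isIso_postcompCommaUnit T adj⟩

def postcompWhiskerTransposeIso {F : A ⥤ B} {U : B ⥤ A} (adjF : F ⊣ U) (p : X ⥤ Y) :
    postcompWhisker F p ⋙ (Comma.transposeEquiv (adjF.whiskerLeft Y) _).functor ≅
      (Comma.transposeEquiv (adjF.whiskerLeft X) _).functor ⋙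
        postcompComma (𝟭 (A ⥤ X) ⋙ (whiskeringLeft B A X).obj U) p :=
  NatIso.ofComponents
    (fun c => Comma.isoMk (Iso.refl _) (Iso.refl _) (by
      ext b
      change (((whiskeringRight A X Y).obj p ⋙ (whiskeringLeft B A Y).obj U).map (𝟙 c.left)).app b ≫
          p.map ((((adjF.whiskerLeft X).homEquiv c.left c.right).symm c.hom).app b) =
        (((adjF.whiskerLeft Y).homEquiv (c.left ⋙ p) (c.right ⋙ p)).symm
          (whiskerRight c.hom p)).app b ≫ 𝟙 _
      simp only [CategoryTheory.Functor.map_id, NatTrans.id_app, Category.id_comp, Category.comp_id]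
      rw [Adjunction.homEquiv_counit, Adjunction.homEquiv_counit]
      simp))
    (fun _ => by ext <;> exact (Category.comp_id _).trans (Category.id_comp _).symm)

/-- Let `F : A ⥤ B` admit a right adjoint and let `p : X ⥤ Y` be a
cocartesian fibration. Then the functor `Φ` sending `(S, L, α : S ⟶ L ∘ F)` to
`(S, p ∘ L, p·α : p ∘ S ⟶ (p ∘ L) ∘ F)` admits a fully faithful left adjoint. -/
theorem statement3 (F : A ⥤ B) (U : B ⥤ A) (adjF : F ⊣ U)
    (p : X ⥤ Y) (hp : IsCocartesianFibration p) :
    ∃ (Ψ : Comma ((Functor.whiskeringRight A X Y).obj p) ((Functor.whiskeringLeft A B Y).obj F) ⥤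
        Comma (𝟭 (A ⥤ X)) ((Functor.whiskeringLeft A B X).obj F))
      (adj : Ψ ⊣ postcompWhisker F p), IsIso adj.unit :=
  (hasFullyFaithfulLeftAdjoint_postcompComma _ hp).of_equivalences _ _
    (postcompWhiskerTransposeIso adjF p)

end Paper
end

section
/- Let p : A ⥤ J and q : B ⥤ J be functors, let F : A ⥤ B satisfy q ∘ F = p, and let U : B ⥤ A satisfy p ∘ U = q, and suppose F is left adjoint to U over J: there is an adjunction F ⊣ U whose unit η : 𝟭_A ⟶ U ∘ F and counit ε : F ∘ U ⟶ 𝟭_B are natural transformations over J, i.e. the whiskerings p·η : p ⟶ p and q·ε : q ⟶ q are the identity natural transformations. Then for any functor t : I ⥤ J, forming the strict pullbacks I ×_J A and I ×_J B in Cat, the induced functors I ×_J F : I ×_J A ⥤ I ×_J B and I ×_J U : I ×_J B ⥤ I ×_J A over I satisfy: I ×_J F is left adjoint to I ×_J U over I, with unit and counit obtained by pulling back η and ε (in particular the pulled back unit and counit project to identities over I). -/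
open CategoryTheory

universe v u

namespace Paper

/-- The strict pullback of two functors `t : I ⥤ J` and `p : A ⥤ J` in `Cat`, realized as
the full subcategory of the comma category `Comma t p` on those objects whose structure
morphism is an `eqToHom`. -/
abbrev CatPB {I J A : Type*} [Category I] [Category J] [Category A]
    (t : I ⥤ J) (p : A ⥤ J) :=
  ObjectProperty.FullSubcategory (fun c : Comma t p => ∃ h : t.obj c.left = p.obj c.right, c.hom = eqToHom h)

/-- First projection `I ×_J A ⥤ I`. -/
def CatPB.fst {I J A : Type*} [Category I] [Category J] [Category A]
    (t : I ⥤ J) (p : A ⥤ J) : CatPB t p ⥤ I :=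
  ObjectProperty.ι _ ⋙ Comma.fst t p

/-- Second projection `I ×_J A ⥤ A`. -/
def CatPB.snd {I J A : Type*} [Category I] [Category J] [Category A]
    (t : I ⥤ J) (p : A ⥤ J) : CatPB t p ⥤ A :=
  ObjectProperty.ι _ ⋙ Comma.snd t p

/-- The functor `I ×_J F : I ×_J A ⥤ I ×_J B` induced on strict pullbacks by a functor
`F : A ⥤ B` over `J`. -/
def CatPB.lift {I J A B : Type*} [Category I] [Category J] [Category A] [Category B]
    (t : I ⥤ J) {p : A ⥤ J} {q : B ⥤ J} (F : A ⥤ B) (hF : F ⋙ q = p) :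
    CatPB t p ⥤ CatPB t q where
  obj c :=
    ⟨{ left := c.obj.left
       right := F.obj c.obj.right
       hom := c.obj.hom ≫ eqToHom (Functor.congr_obj hF c.obj.right).symm },
      by
        obtain ⟨h₀, hh⟩ := c.property
        exact ⟨h₀.trans (Functor.congr_obj hF c.obj.right).symm, by rw [hh, eqToHom_trans]⟩⟩
  map {c c'} φ :=
    ⟨{ left := φ.hom.left
       right := F.map φ.hom.right
       w := by
        have hq := Functor.congr_hom hF φ.hom.right
        simp only [Functor.comp_map] at hq
        simp only [hq, Category.assoc, eqToHom_trans_assoc, eqToHom_refl, Category.id_comp]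
        rw [← Category.assoc, φ.hom.w, Category.assoc] }⟩
  map_id c := by
    apply ObjectProperty.hom_ext
    apply CommaMorphism.ext
    · rfl
    · exact F.map_id c.obj.right
  map_comp f g := by
    apply ObjectProperty.hom_ext
    apply CommaMorphism.ext
    · rfl
    · exact F.map_comp f.hom.right g.hom.right

/-!
A morphism of `I ×_J A` is a morphism of `I` together with a morphism of `A` that agree over `J`.
Pairing the components of `η` and `ε` with identities of `I` therefore gives morphisms of the
pullbacks exactly because `η` and `ε` lie over identities of `J`; naturality and the triangle
identities then hold componentwise.
-/

lemma map_app_eq_eqToHom_of_whiskerRight {C D E : Type*} [Category C]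
    [Category D] [Category E] {G H : C ⥤ D} {α : G ⟶ H} {K : D ⥤ E} {h : G ⋙ K = H ⋙ K}
    (hα : Functor.whiskerRight α K = eqToHom h) (X : C) :
    K.map (α.app X) = eqToHom (Functor.congr_obj h X) := by
  simpa using NatTrans.congr_app hα X

namespace CatPB

section

variable {I J A : Type*} [Category I] [Category J] [Category A] {t : I ⥤ J} {p : A ⥤ J}

lemma hom_ext {c c' : CatPB t p} {φ ψ : c ⟶ c'} (hl : φ.hom.left = ψ.hom.left)
    (hr : φ.hom.right = ψ.hom.right) : φ = ψ :=
  ObjectProperty.hom_ext _ (CommaMorphism.ext hl hr)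

lemma map_eqToHom_comp_hom (c c' : CatPB t p) (hl : c.obj.left = c'.obj.left)
    {g : c.obj.right ⟶ c'.obj.right} {e : p.obj c.obj.right = p.obj c'.obj.right}
    (hg : p.map g = eqToHom e) : t.map (eqToHom hl) ≫ c'.obj.hom = c.obj.hom ≫ p.map g := by
  obtain ⟨_, hc⟩ := c.property
  obtain ⟨_, hc'⟩ := c'.property
  simp [hc, hc', hg, eqToHom_map]

variable {C : Type*} [Category C] {G H : C ⥤ CatPB t p}

def natTransMk (α : G ⋙ fst t p ⟶ H ⋙ fst t p) (β : G ⋙ snd t p ⟶ H ⋙ snd t p)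
    (w : ∀ X, t.map (α.app X) ≫ (H.obj X).obj.hom = (G.obj X).obj.hom ≫ p.map (β.app X)) :
    G ⟶ H where
  app X := ObjectProperty.homMk ⟨α.app X, β.app X, w X⟩
  naturality _ _ f := hom_ext (α.naturality f) (β.naturality f)

end

variable {I J A B : Type*} [Category I] [Category J] [Category A] [Category B]
  (t : I ⥤ J) {p : A ⥤ J} {q : B ⥤ J} {F : A ⥤ B} {U : B ⥤ A}

def liftAdjunction (adj : F ⊣ U) (hF : F ⋙ q = p) (hU : U ⋙ p = q)
    {hη : 𝟭 A ⋙ p = (F ⋙ U) ⋙ p} (hunit : Functor.whiskerRight adj.unit p = eqToHom hη)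
    {hε : (U ⋙ F) ⋙ q = 𝟭 B ⋙ q} (hcounit : Functor.whiskerRight adj.counit q = eqToHom hε) :
    lift t F hF ⊣ lift t U hU where
  unit := natTransMk (𝟙 _) (Functor.whiskerLeft (snd t p) adj.unit) fun X =>
    map_eqToHom_comp_hom X ((lift t F hF ⋙ lift t U hU).obj X) rfl
      (map_app_eq_eqToHom_of_whiskerRight hunit X.obj.right)
  counit := natTransMk (𝟙 _) (Functor.whiskerLeft (snd t q) adj.counit) fun X =>
    map_eqToHom_comp_hom ((lift t U hU ⋙ lift t F hF).obj X) X rfl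
      (map_app_eq_eqToHom_of_whiskerRight hcounit X.obj.right)
  left_triangle_components c :=
    hom_ext (Category.comp_id _) (adj.left_triangle_components c.obj.right)
  right_triangle_components c :=
    hom_ext (Category.comp_id _) (adj.right_triangle_components c.obj.right)

end CatPB

/-- Let `F : A ⥤ B` be left adjoint to `U : B ⥤ A` over `J` (both functors
over `J`, and the whiskerings of the unit and counit with the structure functors to `J` are
identities). Then for any `t : I ⥤ J`, the pulled back functor `I ×_J F` is left adjoint
to `I ×_J U` over `I`, with unit and counit obtained by pulling back the original ones; in
particular the pulled back unit and counit project to identities over `I`. -/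
theorem statement6 {I J A B : Type u}
    [Category.{v} I] [Category.{v} J] [Category.{v} A] [Category.{v} B]
    (p : A ⥤ J) (q : B ⥤ J) (F : A ⥤ B) (U : B ⥤ A)
    (hF : F ⋙ q = p) (hU : U ⋙ p = q) (adj : F ⊣ U)
    (hunit : Functor.whiskerRight adj.unit p =
      eqToHom (by rw [Functor.id_comp, Functor.assoc, hU, hF]))
    (hcounit : Functor.whiskerRight adj.counit q =
      eqToHom (by rw [Functor.id_comp, Functor.assoc, hF, hU]))
    (t : I ⥤ J) :
    ∃ adj' : CatPB.lift t F hF ⊣ CatPB.lift t U hU,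
      (∀ h : CatPB.snd t p ⋙ (F ⋙ U) = (CatPB.lift t F hF ⋙ CatPB.lift t U hU) ⋙ CatPB.snd t p,
        Functor.whiskerRight adj'.unit (CatPB.snd t p) =
          Functor.whiskerLeft (CatPB.snd t p) adj.unit ≫ eqToHom h) ∧
      (∀ h : (CatPB.lift t U hU ⋙ CatPB.lift t F hF) ⋙ CatPB.snd t q = CatPB.snd t q ⋙ (U ⋙ F),
        Functor.whiskerRight adj'.counit (CatPB.snd t q) =
          eqToHom h ≫ Functor.whiskerLeft (CatPB.snd t q) adj.counit) ∧
      (∀ h : 𝟭 (CatPB t p) ⋙ CatPB.fst t p = (CatPB.lift t F hF ⋙ CatPB.lift t U hU) ⋙ CatPB.fst t p,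
        Functor.whiskerRight adj'.unit (CatPB.fst t p) = eqToHom h) ∧
      (∀ h : (CatPB.lift t U hU ⋙ CatPB.lift t F hF) ⋙ CatPB.fst t q = 𝟭 (CatPB t q) ⋙ CatPB.fst t q,
        Functor.whiskerRight adj'.counit (CatPB.fst t q) = eqToHom h) :=
  -- each `eqToHom h` relates definitionally equal functors, so it is an identity on the nose
  ⟨CatPB.liftAdjunction t adj hF hU hunit hcounit, fun _ => (Category.comp_id _).symm,
    fun _ => (Category.id_comp _).symm, fun _ => rfl, fun _ => rfl⟩

end Paper
end

section
/- Let p : A ⥤ I be a cocartesian fibration. Then the induced functor p∗ : Arrow A ⥤ Arrow I on arrow categories is a cocartesian fibration, and for each i ∈ {0,1} the evaluation functor ev_i : Arrow A ⥤ A is a cocartesian functor over ev_i : Arrow I ⥤ I, with respect to the cocartesian fibrations p∗ and p. -/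
open CategoryTheory

universe v u

namespace Paper

/-- The mate of a strictly commutative square `m ⋙ b = a ⋙ n` in which the two functors
`a` and `b` admit left adjoints `a'` resp. `b'`. -/
def mateRR {A X Y B : Type*} [Category A] [Category X] [Category Y] [Category B]
    {a : X ⥤ A} {a' : A ⥤ X} {b : Y ⥤ B} {b' : B ⥤ Y} {m : X ⥤ Y} {n : A ⥤ B}
    (adja : a' ⊣ a) (adjb : b' ⊣ b) (hsq : m ⋙ b = a ⋙ n) : n ⋙ b' ⟶ a' ⋙ m :=
  Functor.whiskerRight adja.unit (n ⋙ b') ≫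
    eqToHom (by
      simp only [Functor.assoc]
      rw [← Functor.assoc a n b', ← hsq]
      simp only [Functor.assoc]) ≫
    Functor.whiskerLeft (a' ⋙ m) adjb.counit

/-- The functor `Comma p (𝟭 A) ⥤ Comma q (𝟭 B)`, `(x, g) ↦ (F.obj x, G.map g)`. -/
def commaMapCocart {X A Y B : Type*} [Category X] [Category A] [Category Y] [Category B]
    (p : X ⥤ A) (q : Y ⥤ B) (F : X ⥤ Y) (G : A ⥤ B)
    (h : F ⋙ q = p ⋙ G) : Comma p (𝟭 A) ⥤ Comma q (𝟭 B) where
  obj c :=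
    { left := F.obj c.left
      right := G.obj c.right
      hom := eqToHom (Functor.congr_obj h c.left) ≫ G.map c.hom }
  map {c c'} φ :=
    { left := F.map φ.left
      right := G.map φ.right
      w := by
        have hh := Functor.congr_hom h φ.left
        have hw := φ.w
        simp only [Functor.comp_map] at hh
        simp only [Functor.id_map] at hw ⊢
        rw [hh]
        simp only [Category.assoc, eqToHom_trans_assoc, eqToHom_refl, Category.id_comp]
        rw [← G.map_comp, ← G.map_comp, hw] }

/-- `F` is a cocartesian functor over `G` if the induced square relating the two comparison
functors is adjointable with respect to the cocartesian-lift left adjoints. -/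
def IsCocartesianFunctor {X A Y B : Type*} [Category X] [Category A] [Category Y] [Category B]
    (p : X ⥤ A) (q : Y ⥤ B) (F : X ⥤ Y) (G : A ⥤ B)
    (h : F ⋙ q = p ⋙ G) : Prop :=
  ∃ (Lp : Comma p (𝟭 A) ⥤ Arrow X) (adjp : Lp ⊣ toCocartComma p)
    (Lq : Comma q (𝟭 B) ⥤ Arrow Y) (adjq : Lq ⊣ toCocartComma q)
    (_ : IsIso adjp.unit) (_ : IsIso adjq.unit)
    (hsq : F.mapArrow ⋙ toCocartComma q = toCocartComma p ⋙ commaMapCocart p q F G h),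
    IsIso (mateRR adjp adjq hsq)

end Paper

/-! The objects of `Comma p.mapArrow (𝟭 (Arrow I))` are the arrows of `Comma p (𝟭 I)`, and
the comparison functor of `p.mapArrow` is, up to transposing squares, the comparison functor of
`p` applied arrowwise. So if `L ⊣ toCocartComma p`, then `L.mapArrow ⊣ (toCocartComma p).mapArrow`
transports to a left adjoint of `toCocartComma p.mapArrow`, whose unit is the unit of `L ⊣ _` on
the two edges of a square, hence invertible. These cocartesian lifts commute on the nose with
evaluation at the source and at the target, units included, so the mates that define
cocartesianness of `ev₀` and `ev₁` are identities. -/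

namespace CategoryTheory

section Arrow

variable {C D : Type*} [Category C] [Category D]

def Adjunction.mapArrow {L : C ⥤ D} {R : D ⥤ C} (adj : L ⊣ R) : L.mapArrow ⊣ R.mapArrow where
  unit := (Functor.mapArrowFunctor C C).map adj.unit
  counit := (Functor.mapArrowFunctor D D).map adj.counit
  left_triangle_components f := by
    ext; exacts [adj.left_triangle_components f.left, adj.left_triangle_components f.right]
  right_triangle_components f := by
    ext; exacts [adj.right_triangle_components f.left, adj.right_triangle_components f.right]

lemma Adjunction.map_unit_comp_eqToHom_comp_counit {L : C ⥤ D} {R : D ⥤ C} (adj : L ⊣ R)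
    {c : C} {d : D} (e : L.obj (R.obj (L.obj c)) = L.obj (R.obj d)) (e' : L.obj c = d) :
    L.map (adj.unit.app c) ≫ eqToHom e ≫ adj.counit.app d = eqToHom e' := by
  subst e'
  simp

def Arrow.transpose : Arrow (Arrow C) ⥤ Arrow (Arrow C) where
  obj φ := Arrow.mk (Arrow.homMk φ.left.hom φ.right.hom φ.hom.w.symm :
    Arrow.mk φ.hom.left ⟶ Arrow.mk φ.hom.right)
  map ρ := Arrow.homMk (Arrow.homMk ρ.left.left ρ.right.left (congrArg CommaMorphism.left ρ.w))
    (Arrow.homMk ρ.left.right ρ.right.right (congrArg CommaMorphism.right ρ.w))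
    (by ext; exacts [ρ.left.w, ρ.right.w])

end Arrow

namespace Comma

variable {C X Y T : Type*} [Category C] [Category X] [Category Y] [Category T]

lemma ext_of_heq {L : X ⥤ T} {R : Y ⥤ T} {c d : Comma L R} (hl : c.left = d.left)
    (hr : c.right = d.right) (hhom : c.hom ≍ d.hom) : c = d := by
  obtain ⟨cl, cr, ch⟩ := c
  obtain ⟨dl, dr, dh⟩ := d
  dsimp only at hl hr hhom
  subst hl hr
  rw [eq_of_heq hhom]

lemma functor_ext {L : X ⥤ T} {R : Y ⥤ T} {n₁ n₂ : C ⥤ Comma L R}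
    (hl : n₁ ⋙ Comma.fst L R = n₂ ⋙ Comma.fst L R) (hr : n₁ ⋙ Comma.snd L R = n₂ ⋙ Comma.snd L R)
    (hhom : ∀ c, (n₁.obj c).hom ≍ (n₂.obj c).hom) : n₁ = n₂ :=
  Functor.ext (fun c => ext_of_heq (Functor.congr_obj hl c) (Functor.congr_obj hr c) (hhom c))
    (fun _ _ f => by
      ext
      · simpa [eqToHom_left] using Functor.congr_hom hl f
      · simpa [eqToHom_right] using Functor.congr_hom hr f)

variable (F : X ⥤ T)

def mapArrowToArrow : Comma F.mapArrow (𝟭 (Arrow T)) ⥤ Arrow (Comma F (𝟭 T)) where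
  obj c := Arrow.mk (X := ⟨c.left.left, c.right.left, c.hom.left⟩)
    (Y := ⟨c.left.right, c.right.right, c.hom.right⟩) ⟨c.left.hom, c.right.hom, c.hom.w.symm⟩
  map φ := Arrow.homMk ⟨φ.left.left, φ.right.left, congrArg CommaMorphism.left φ.w⟩
    ⟨φ.left.right, φ.right.right, congrArg CommaMorphism.right φ.w⟩
    (by ext; exacts [φ.left.w, φ.right.w])

def arrowToMapArrow : Arrow (Comma F (𝟭 T)) ⥤ Comma F.mapArrow (𝟭 (Arrow T)) where
  obj f := ⟨Arrow.mk f.hom.left, Arrow.mk f.hom.right,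
    Arrow.homMk f.left.hom f.right.hom f.hom.w.symm⟩
  map φ := ⟨Arrow.homMk φ.left.left φ.right.left (congrArg CommaMorphism.left φ.w),
    Arrow.homMk φ.left.right φ.right.right (congrArg CommaMorphism.right φ.w),
    by ext; exacts [φ.left.w, φ.right.w]⟩

end Comma

end CategoryTheory

namespace Paper

section Mate

variable {A X Y B : Type*} [Category A] [Category X] [Category Y] [Category B]

lemma mateRR_eq_eqToHom {a : X ⥤ A} {a' : A ⥤ X} {b : Y ⥤ B} {b' : B ⥤ Y} {m : X ⥤ Y}
    {n : A ⥤ B} (adja : a' ⊣ a) (adjb : b' ⊣ b) (hsq : m ⋙ b = a ⋙ n) (hL : n ⋙ b' = a' ⋙ m)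
    (hunit : Functor.whiskerRight adja.unit n = Functor.whiskerLeft n adjb.unit ≫
      eqToHom (by rw [← Functor.assoc, hL, Functor.assoc, hsq]; rfl)) :
    mateRR adja adjb hsq = eqToHom hL := by
  ext c
  have hunit_c := NatTrans.congr_app hunit c
  simp only [Functor.whiskerRight_app, NatTrans.comp_app, Functor.whiskerLeft_app,
    eqToHom_app] at hunit_c
  simp only [mateRR, NatTrans.comp_app, Functor.whiskerRight_app, Functor.whiskerLeft_app,
    eqToHom_app, Functor.comp_map, hunit_c, Functor.map_comp, eqToHom_map, Category.assoc,
    eqToHom_trans_assoc]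
  exact adjb.map_unit_comp_eqToHom_comp_counit _ _

/-- `n` is any functor equal to `commaMapCocart p q F G h`, so that the other hypotheses can be
checked on a functor for which they hold definitionally. -/
lemma isCocartesianFunctor_of_eq {p : X ⥤ A} {q : Y ⥤ B} {F : X ⥤ Y} {G : A ⥤ B}
    {h : F ⋙ q = p ⋙ G} {Lp : Comma p (𝟭 A) ⥤ Arrow X} {Lq : Comma q (𝟭 B) ⥤ Arrow Y}
    (adjp : Lp ⊣ toCocartComma p) (adjq : Lq ⊣ toCocartComma q) [IsIso adjp.unit]
    [IsIso adjq.unit] {n : Comma p (𝟭 A) ⥤ Comma q (𝟭 B)} (hn : commaMapCocart p q F G h = n)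
    (hsq : F.mapArrow ⋙ toCocartComma q = toCocartComma p ⋙ n) (hL : n ⋙ Lq = Lp ⋙ F.mapArrow)
    (hunit : Functor.whiskerRight adjp.unit n = Functor.whiskerLeft n adjq.unit ≫
      eqToHom (by rw [← Functor.assoc, hL, Functor.assoc, hsq]; rfl)) :
    IsCocartesianFunctor p q F G h := by
  subst hn
  refine ⟨Lp, adjp, Lq, adjq, inferInstance, inferInstance, hsq, ?_⟩
  rw [mateRR_eq_eqToHom adjp adjq hsq hL hunit]
  infer_instance

end Mate

section MapArrow

variable {A I : Type*} [Category A] [Category I] (p : A ⥤ I)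

def mapArrowCocartLift (L : Comma p (𝟭 I) ⥤ Arrow A) :
    Comma p.mapArrow (𝟭 (Arrow I)) ⥤ Arrow (Arrow A) :=
  Comma.mapArrowToArrow p ⋙ L.mapArrow ⋙ Arrow.transpose

def mapArrowCocartAdjunction {L : Comma p (𝟭 I) ⥤ Arrow A} (adj : L ⊣ toCocartComma p) :
    mapArrowCocartLift p L ⊣ toCocartComma p.mapArrow where
  unit := Functor.whiskerLeft (Comma.mapArrowToArrow p)
    (Functor.whiskerRight adj.mapArrow.unit (Comma.arrowToMapArrow p))
  counit := Functor.whiskerLeft Arrow.transpose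
    (Functor.whiskerRight adj.mapArrow.counit Arrow.transpose)
  left_triangle_components c := by
    have h₀ := adj.left_triangle_components ((Comma.mapArrowToArrow p).obj c).left
    have h₁ := adj.left_triangle_components ((Comma.mapArrowToArrow p).obj c).right
    have h₀l := congrArg CommaMorphism.left h₀
    have h₁l := congrArg CommaMorphism.left h₁
    have h₀r := congrArg CommaMorphism.right h₀
    have h₁r := congrArg CommaMorphism.right h₁
    ext1 <;> ext1
    exacts [h₀l, h₁l, h₀r, h₁r]
  right_triangle_components φ := by
    have h₀ := adj.right_triangle_components (Arrow.transpose.obj φ).left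
    have h₁ := adj.right_triangle_components (Arrow.transpose.obj φ).right
    have h₀l := congrArg CommaMorphism.left h₀
    have h₁l := congrArg CommaMorphism.left h₁
    have h₀r := congrArg CommaMorphism.right h₀
    have h₁r := congrArg CommaMorphism.right h₁
    ext1 <;> ext1
    exacts [h₀l, h₁l, h₀r, h₁r]

instance {L : Comma p (𝟭 I) ⥤ Arrow A} (adj : L ⊣ toCocartComma p) [IsIso adj.unit] :
    IsIso (mapArrowCocartAdjunction p adj).unit :=
  have : IsIso adj.mapArrow.unit := Functor.map_isIso (Functor.mapArrowFunctor _ _) adj.unit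
  Functor.isIso_whiskerLeft _ (Functor.whiskerRight adj.mapArrow.unit _)

-- The `eqToHom` built into `commaMapCocart` here relates definitionally equal objects, so it
-- reduces to `𝟙`; the same happens to the `eqToHom` in `isCocartesianFunctor_of_eq` below.
lemma commaMapCocart_leftFunc (h : Arrow.leftFunc ⋙ p = p.mapArrow ⋙ Arrow.leftFunc) :
    commaMapCocart p.mapArrow p Arrow.leftFunc Arrow.leftFunc h =
      Comma.mapArrowToArrow p ⋙ Arrow.leftFunc :=
  Comma.functor_ext rfl rfl fun _ => heq_of_eq (Category.id_comp _)

lemma commaMapCocart_rightFunc (h : Arrow.rightFunc ⋙ p = p.mapArrow ⋙ Arrow.rightFunc) :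
    commaMapCocart p.mapArrow p Arrow.rightFunc Arrow.rightFunc h =
      Comma.mapArrowToArrow p ⋙ Arrow.rightFunc :=
  Comma.functor_ext rfl rfl fun _ => heq_of_eq (Category.id_comp _)

variable {p} {L : Comma p (𝟭 I) ⥤ Arrow A}

lemma isCocartesianFunctor_leftFunc (adj : L ⊣ toCocartComma p) [IsIso adj.unit]
    (h : Arrow.leftFunc ⋙ p = p.mapArrow ⋙ Arrow.leftFunc) :
    IsCocartesianFunctor p.mapArrow p Arrow.leftFunc Arrow.leftFunc h :=
  isCocartesianFunctor_of_eq (mapArrowCocartAdjunction p adj) adj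
    (commaMapCocart_leftFunc p h) rfl rfl
    (NatTrans.ext (funext fun _ => (Category.comp_id _).symm))

lemma isCocartesianFunctor_rightFunc (adj : L ⊣ toCocartComma p) [IsIso adj.unit]
    (h : Arrow.rightFunc ⋙ p = p.mapArrow ⋙ Arrow.rightFunc) :
    IsCocartesianFunctor p.mapArrow p Arrow.rightFunc Arrow.rightFunc h :=
  isCocartesianFunctor_of_eq (mapArrowCocartAdjunction p adj) adj
    (commaMapCocart_rightFunc p h) rfl rfl
    (NatTrans.ext (funext fun _ => (Category.comp_id _).symm))

end MapArrow

/-- If `p : A ⥤ I` is a cocartesian fibration then so is the induced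
functor `p∗ : Arrow A ⥤ Arrow I`, and the source and target evaluation functors are
cocartesian functors over the corresponding evaluation functors. -/
theorem statement10 {A I : Type u} [Category.{v} A] [Category.{v} I]
    (p : A ⥤ I) (hp : IsCocartesianFibration p) :
    IsCocartesianFibration p.mapArrow ∧
    (∃ h : (Arrow.leftFunc : Arrow A ⥤ A) ⋙ p = p.mapArrow ⋙ (Arrow.leftFunc : Arrow I ⥤ I),
      IsCocartesianFunctor p.mapArrow p Arrow.leftFunc Arrow.leftFunc h) ∧
    (∃ h : (Arrow.rightFunc : Arrow A ⥤ A) ⋙ p = p.mapArrow ⋙ (Arrow.rightFunc : Arrow I ⥤ I),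
      IsCocartesianFunctor p.mapArrow p Arrow.rightFunc Arrow.rightFunc h) := by
  obtain ⟨L, adj, _⟩ := hp
  exact ⟨⟨_, mapArrowCocartAdjunction p adj, inferInstance⟩,
    ⟨rfl, isCocartesianFunctor_leftFunc adj rfl⟩, ⟨rfl, isCocartesianFunctor_rightFunc adj rfl⟩⟩

end Paper
end

section
/- For any functor F : B ⥤ A, the following are equivalent: (1) F admits a right adjoint; (2) the projection functor ev₁ : Comma F (𝟭 A) ⥤ A, sending a pair (b, g : F.obj b → a) to a, admits a fully faithful right adjoint, i.e. a right adjoint whose adjunction counit is a natural isomorphism. -/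
/-!
Given `F ⊣ U`, a morphism from `(b, g : F b ⟶ a')` to `(U a, a, ε_a)` in `Comma F (𝟭 A)` is a
morphism `a' ⟶ a` together with a map `b ⟶ U a` that is forced to be its adjoint transpose; so
`a ↦ (U a, a, ε_a)` is right adjoint to the projection, with identity counit. Conversely,
`b ↦ (b, 𝟙 (F b))` is left adjoint to the first projection and composes with the second
projection to `F`, so composing adjunctions turns any right adjoint `R` of the second projection
into the right adjoint `R ⋙ Comma.fst` of `F`.
-/

open CategoryTheory

universe v u v₁ v₂ u₁ u₂

namespace Paper

section

variable {A : Type u₁} {B : Type u₂} [Category.{v₁} A] [Category.{v₂} B]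

@[simps]
abbrev toCommaId (F : B ⥤ A) : B ⥤ Comma F (𝟭 A) where
  obj b := ⟨b, F.obj b, 𝟙 _⟩
  map f := ⟨f, F.map f, by simp⟩

def toCommaIdAdjFst (F : B ⥤ A) : toCommaId F ⊣ Comma.fst F (𝟭 A) :=
  Adjunction.mkOfHomEquiv
    { homEquiv b X :=
        { toFun m := m.left
          invFun f := ⟨f, F.map f ≫ X.hom, by simp⟩
          left_inv m := by ext <;> simp
          right_inv _ := rfl } }

@[simps]
def counitComma {F : B ⥤ A} {U : A ⥤ B} (adj : F ⊣ U) : A ⥤ Comma F (𝟭 A) where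
  obj a := ⟨U.obj a, a, adj.counit.app a⟩
  map f := ⟨U.map f, f, by simp⟩

def sndAdjCounitComma {F : B ⥤ A} {U : A ⥤ B} (adj : F ⊣ U) :
    Comma.snd F (𝟭 A) ⊣ counitComma adj :=
  Adjunction.mkOfHomEquiv
    { homEquiv X a :=
        { toFun h := ⟨adj.homEquiv _ _ (X.hom ≫ h), h, (adj.homEquiv _ _).symm_apply_apply _⟩
          invFun m := m.right
          left_inv _ := rfl
          right_inv m := by
            ext
            · exact (adj.homEquiv_apply_eq _ _).2 m.w.symm
            · rfl }
      homEquiv_naturality_left_symm _ _ := rfl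
      homEquiv_naturality_right _ _ := by
        ext
        · exact (congrArg (adj.homEquiv _ _) (Category.assoc _ _ _).symm).trans
            (adj.homEquiv_naturality_right _ _)
        · rfl }

lemma sndAdjCounitComma_counit {F : B ⥤ A} {U : A ⥤ B} (adj : F ⊣ U) :
    (sndAdjCounitComma adj).counit = 𝟙 (𝟭 A) := by
  ext
  rfl

end

/-- A functor `F : B ⥤ A` admits a right adjoint if and only if the
projection `ev₁ : Comma F (𝟭 A) ⥤ A` admits a fully faithful right adjoint. -/
theorem statement13 {A B : Type u} [Category.{v} A] [Category.{v} B] (F : B ⥤ A) :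
    (∃ U : A ⥤ B, Nonempty (F ⊣ U)) ↔
      ∃ (R : A ⥤ Comma F (𝟭 A)) (adj : Comma.snd F (𝟭 A) ⊣ R), IsIso adj.counit := by
  constructor
  · rintro ⟨U, ⟨adj⟩⟩
    refine ⟨counitComma adj, sndAdjCounitComma adj, ?_⟩
    rw [sndAdjCounitComma_counit]
    exact IsIso.id _
  · rintro ⟨R, adj, -⟩
    exact ⟨R ⋙ Comma.fst F (𝟭 A), ⟨(toCommaIdAdjFst F).comp adj⟩⟩

end Paper
end

section
/- Let p : X ⥤ B be a cocartesian fibration, and let f : S ⟶ T and g : T ⟶ R be natural transformations between functors A ⥤ X such that f is a p-cocartesian lift. Then g is a p-cocartesian lift if and only if the composite g ∘ f : S ⟶ R is a p-cocartesian lift. In particular (taking A the terminal category), for composable morphisms f and g of X with f p-cocartesian, g is p-cocartesian if and only if g ∘ f is p-cocartesian. -/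
/-!
When the unit of `L ⊣ toCocartComma p` is invertible, `L` is fully faithful, so its essential
image consists of the arrows at which the counit is invertible. By Yoneda, the counit is
invertible at `f` iff `toCocartComma p` is bijective on morphisms out of `f` in `Arrow X`, which
unwinds to `f` being strongly cocartesian over `p.map f` in the sense of
`Functor.IsStronglyCocartesian`. Both notions of cocartesian lift thus become (componentwise)
strong cocartesianness, which satisfies the two-out-of-three property
(`IsStronglyCocartesian.comp` and `IsStronglyCocartesian.of_comp`).
-/

open CategoryTheory

universe v v' u u'

namespace Paper

/-- The functor `A ⥤ Arrow X` corresponding to a natural transformation between two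
functors `A ⥤ X`. -/
def natTransToArrow {A X : Type*} [Category A] [Category X] {S T : A ⥤ X} (φ : S ⟶ T) :
    A ⥤ Arrow X where
  obj a := Arrow.mk (φ.app a)
  map {a a'} f := Arrow.homMk (u := S.map f) (v := T.map f) (φ.naturality f)

/-- A natural transformation `φ` between functors `A ⥤ X` is a `p`-cocartesian lift if the
corresponding functor `A ⥤ Arrow X` is, up to natural isomorphism, in the essential image
of the cocartesian-lift left adjoint of the comparison functor of `p`. -/
def IsCocartesianLift {X B A : Type*} [Category X] [Category B] [Category A]
    (p : X ⥤ B) {S T : A ⥤ X} (φ : S ⟶ T) : Prop :=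
  ∃ (L : Comma p (𝟭 B) ⥤ Arrow X) (adj : L ⊣ toCocartComma p) (_ : IsIso adj.unit)
    (K : A ⥤ Comma p (𝟭 B)), Nonempty (K ⋙ L ≅ natTransToArrow φ)

/-- A morphism `f` of `X` is a `p`-cocartesian lift if the corresponding object of
`Arrow X` is, up to isomorphism, in the essential image of the cocartesian-lift left
adjoint of the comparison functor of `p`. -/
def IsCocartesianMorphism {X B : Type*} [Category X] [Category B] (p : X ⥤ B)
    {x x' : X} (f : x ⟶ x') : Prop :=
  ∃ (L : Comma p (𝟭 B) ⥤ Arrow X) (adj : L ⊣ toCocartComma p) (_ : IsIso adj.unit)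
    (c : Comma p (𝟭 B)), Nonempty (L.obj c ≅ Arrow.mk f)


lemma _root_.CategoryTheory.Adjunction.isIso_counit_app_iff_bijective_map
    {C D : Type*} [Category C] [Category D] {L : C ⥤ D} {R : D ⥤ C} (adj : L ⊣ R) (a : D) :
    IsIso (adj.counit.app a) ↔
      ∀ b : D, Function.Bijective (fun u : a ⟶ b => R.map u) := by
  rw [isIso_iff_coyoneda_map_bijective]
  refine forall_congr' fun b => ?_
  have : (fun u : a ⟶ b => R.map u) =
      adj.homEquiv _ b ∘ fun u => adj.counit.app a ≫ u := by
    funext u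
    simp [Adjunction.homEquiv_unit]
  rw [this, Equiv.comp_bijective]

section

variable {X B : Type*} [Category X] [Category B] (p : X ⥤ B)

lemma isHomLift_iff_map_eq {x y : X} (g : p.obj x ⟶ p.obj y) (χ : x ⟶ y) :
    p.IsHomLift g χ ↔ p.map χ = g :=
  ⟨fun _ => (IsHomLift.eq_of_isHomLift p g χ).symm, fun h => h ▸ inferInstance⟩

lemma isStronglyCocartesian_of_bijective_map {x y : X} (f : x ⟶ y)
    (hf : ∀ b : Arrow X,
      Function.Bijective (fun u : Arrow.mk f ⟶ b => (toCocartComma p).map u)) :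
    p.IsStronglyCocartesian (p.map f) f where
  universal_property' {z} g h _ := by
    have hw : p.map h = p.map f ≫ g := (IsHomLift.eq_of_isHomLift p _ h).symm
    -- morphisms `Arrow.mk f ⟶ Arrow.mk (𝟙 z)` are exactly the factorizations of `h` through `f`
    obtain ⟨u, hu⟩ := (hf (Arrow.mk (𝟙 z))).2
      { left := h, right := g, w := by simp [toCocartComma, hw] }
    have hul : u.left = h := congrArg CommaMorphism.left hu
    have hur : p.map u.right = g := congrArg CommaMorphism.right hu
    refine ⟨u.right, ⟨(isHomLift_iff_map_eq p _ _).2 hur, by simpa [hul] using u.w.symm⟩, ?_⟩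
    rintro χ ⟨hχ, hfχ⟩
    rw [isHomLift_iff_map_eq] at hχ
    have : Arrow.homMk (f := Arrow.mk f) (g := Arrow.mk (𝟙 z)) h χ (by simp [hfχ]) = u :=
      (hf _).1 (by ext <;> simp [toCocartComma, hul, hur, hχ])
    exact congrArg CommaMorphism.right this

lemma bijective_map_of_isStronglyCocartesian {x y : X} (f : x ⟶ y)
    [p.IsStronglyCocartesian (p.map f) f] (b : Arrow X) :
    Function.Bijective (fun u : Arrow.mk f ⟶ b => (toCocartComma p).map u) := by
  constructor
  · intro u u' (huu : (toCocartComma p).map u = (toCocartComma p).map u')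
    have hl : u.left = u'.left := (Comma.hom_ext_iff.1 huu).1
    have hr : p.map u.right = p.map u'.right := (Comma.hom_ext_iff.1 huu).2
    have : p.IsHomLift (p.map u.right) u'.right := (isHomLift_iff_map_eq p _ _).2 hr.symm
    have hfu : f ≫ u.right = f ≫ u'.right :=
      calc f ≫ u.right = u.left ≫ b.hom := u.w.symm
        _ = f ≫ u'.right := by rw [hl]; exact u'.w
    ext
    · exact hl
    · exact Functor.IsStronglyCocartesian.ext p (p.map f) f (p.map u.right) hfu
  · intro c
    let h : x ⟶ b.right := c.left ≫ b.hom
    let g : p.obj y ⟶ p.obj b.right := c.right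
    have hc : p.map h = p.map f ≫ g := (p.map_comp _ _).trans c.w
    obtain ⟨χ, ⟨hχ, hfχ⟩, -⟩ :=
      Functor.IsStronglyCocartesian.universal_property p (p.map f) f g _ hc h
    refine ⟨Arrow.homMk c.left χ hfχ.symm, ?_⟩
    ext
    · rfl
    · exact (isHomLift_iff_map_eq p _ _).1 hχ

lemma isIso_counit_app_mk_iff {L : Comma p (𝟭 B) ⥤ Arrow X} (adj : L ⊣ toCocartComma p)
    {x y : X} (f : x ⟶ y) :
    IsIso (adj.counit.app (Arrow.mk f)) ↔ p.IsStronglyCocartesian (p.map f) f := by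
  rw [adj.isIso_counit_app_iff_bijective_map]
  exact ⟨isStronglyCocartesian_of_bijective_map p f,
    fun _ => bijective_map_of_isStronglyCocartesian p f⟩

lemma isCocartesianMorphism_iff (hp : IsCocartesianFibration p) {x y : X} (f : x ⟶ y) :
    IsCocartesianMorphism p f ↔ p.IsStronglyCocartesian (p.map f) f := by
  constructor
  · rintro ⟨L, adj, _, c, ⟨e⟩⟩
    have := adj.fullyFaithfulLOfIsIsoUnit.full
    have := adj.fullyFaithfulLOfIsIsoUnit.faithful
    exact (isIso_counit_app_mk_iff p adj f).1 (adj.isIso_counit_app_of_iso e.symm)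
  · intro hf
    obtain ⟨L, adj, hu⟩ := hp
    have := (isIso_counit_app_mk_iff p adj f).2 hf
    exact ⟨L, adj, hu, _, ⟨asIso (adj.counit.app (Arrow.mk f))⟩⟩

lemma IsCocartesianLift.isCocartesianMorphism_app {A : Type*} [Category A] {S T : A ⥤ X}
    {φ : S ⟶ T} (hφ : IsCocartesianLift p φ) (a : A) : IsCocartesianMorphism p (φ.app a) := by
  obtain ⟨L, adj, hu, K, ⟨e⟩⟩ := hφ
  exact ⟨L, adj, hu, K.obj a, ⟨e.app a⟩⟩

lemma isCocartesianLift_iff (hp : IsCocartesianFibration p) {A : Type*} [Category A]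
    {S T : A ⥤ X} (φ : S ⟶ T) :
    IsCocartesianLift p φ ↔ ∀ a, p.IsStronglyCocartesian (p.map (φ.app a)) (φ.app a) := by
  refine ⟨fun hφ a => (isCocartesianMorphism_iff p hp _).1 (hφ.isCocartesianMorphism_app p a),
    fun hφ => ?_⟩
  obtain ⟨L, adj, hu⟩ := hp
  have : ∀ a, IsIso ((Functor.whiskerLeft (natTransToArrow φ) adj.counit).app a) :=
    fun a => (isIso_counit_app_mk_iff p adj _).2 (hφ a)
  have : IsIso (Functor.whiskerLeft (natTransToArrow φ) adj.counit) :=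
    NatIso.isIso_of_isIso_app _
  exact ⟨L, adj, hu, natTransToArrow φ ⋙ toCocartComma p,
    ⟨asIso (Functor.whiskerLeft (natTransToArrow φ) adj.counit)⟩⟩

lemma isStronglyCocartesian_comp_iff {x y z : X} (f : x ⟶ y) (g : y ⟶ z)
    [p.IsStronglyCocartesian (p.map f) f] :
    p.IsStronglyCocartesian (p.map g) g ↔ p.IsStronglyCocartesian (p.map (f ≫ g)) (f ≫ g) := by
  rw [p.map_comp]
  exact ⟨fun _ => inferInstance, fun _ => .of_comp p (f := p.map f) (φ := f)⟩

end

/-- Let `p : X ⥤ B` be a cocartesian fibration. Given natural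
transformations `f : S ⟶ T` and `g : T ⟶ R` between functors `A ⥤ X` with `f` a
`p`-cocartesian lift, `g` is a `p`-cocartesian lift iff `f ≫ g` is. In particular, for
composable morphisms of `X` with the first one cocartesian, the second is cocartesian iff
the composite is. -/
theorem statement14 {X B : Type u} [Category.{v} X] [Category.{v} B]
    (p : X ⥤ B) (hp : IsCocartesianFibration p) :
    (∀ {A : Type u'} [Category.{v'} A] {S T R : A ⥤ X} (f : S ⟶ T) (g : T ⟶ R),
      IsCocartesianLift p f → (IsCocartesianLift p g ↔ IsCocartesianLift p (f ≫ g))) ∧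
    (∀ {x y z : X} (f : x ⟶ y) (g : y ⟶ z),
      IsCocartesianMorphism p f →
        (IsCocartesianMorphism p g ↔ IsCocartesianMorphism p (f ≫ g))) := by
  constructor
  · intro A _ S T R f g hf
    rw [isCocartesianLift_iff p hp] at hf
    rw [isCocartesianLift_iff p hp, isCocartesianLift_iff p hp]
    exact forall_congr' fun a => isStronglyCocartesian_comp_iff p (f.app a) (g.app a)
  · intro x y z f g hf
    rw [isCocartesianMorphism_iff p hp] at hf
    rw [isCocartesianMorphism_iff p hp, isCocartesianMorphism_iff p hp]
    exact isStronglyCocartesian_comp_iff p f g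

end Paper
end
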